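/- arXiv:2603.19590 — 7 statements merged into one kernel-verified Lean document; each statement's English description precedes it below -/
import Mathlib

section
/- Let A be a symmetric real n×n matrix, x a unit eigenvector of A with eigenvalue λ, and m ≥ 1. Let B be the (n+mn)×(n+mn) block matrix with top-left block A, top-right block A⊗1_{1×m} (i.e. m horizontal copies of A), bottom-left block A⊗1_{m×1}, and bottom-right block the mn×mn zero matrix. If μ ≠ 0 satisfies μ² - λμ - mλ² = 0 and c = λ/μ, then the vector y = (x, c·(1_m ⊗ x)) (the vector whose first n coordinates are x and whose remaining coordinates consist of m copies of c·x) satisfies B y = μ y. -/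
/-!
For every `x`, the splitting matrix sends `(x, c·(1_m ⊗ x))` to `((1 + m c)·Ax, 1_m ⊗ Ax)`. For an eigenvector `x` with eigenvalue `λ`, the
image is `μ` times the vector exactly when `μ c = λ` and `(1 + m c) λ = μ`; with `c = λ / μ` both
reduce to the quadratic `μ² - λμ - mλ² = 0`.
-/

open Matrix

section Splitting

variable {R ι κ : Type*} [CommSemiring R] [Fintype ι]

theorem mulVec_of_snd (A : Matrix ι ι R) (x : ι → R) :
    (of fun (p : κ × ι) j => A p.2 j) *ᵥ x = fun p => (A *ᵥ x) p.2 :=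
  rfl

variable [Fintype κ]

theorem mulVec_replicate_snd (A : Matrix ι ι R) (x : ι → R) (c : R) :
    (of fun i (p : κ × ι) => A i p.2) *ᵥ (fun p => c * x p.2) =
      (Fintype.card κ * c) • (A *ᵥ x) := by
  ext i
  simp only [mulVec, dotProduct, of_apply, Fintype.sum_prod_type, Finset.sum_const,
    Finset.card_univ, nsmul_eq_mul, Pi.smul_apply, smul_eq_mul, Finset.mul_sum]
  exact Finset.sum_congr rfl fun j _ => by ring

theorem fromBlocks_splitting_mulVec (A : Matrix ι ι R) (x : ι → R) (c : R) :
    fromBlocks A (of fun i (p : κ × ι) => A i p.2) (of fun (p : κ × ι) j => A p.2 j) 0 *ᵥ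
        Sum.elim x (fun p => c * x p.2) =
      Sum.elim ((1 + Fintype.card κ * c) • (A *ᵥ x)) (fun p => (A *ᵥ x) p.2) := by
  rw [fromBlocks_mulVec, Sum.elim_comp_inl, Sum.elim_comp_inr, mulVec_replicate_snd,
    mulVec_of_snd, zero_mulVec, add_zero, add_smul, one_smul]

end Splitting

theorem stmt_4_general (n m : ℕ)
    (A : Matrix (Fin n) (Fin n) ℝ)
    (x : Fin n → ℝ)
    (lam : ℝ) (hAx : A.mulVec x = lam • x)
    (mu : ℝ) (hmu0 : mu ≠ 0) (hmu : mu ^ 2 - lam * mu - m * lam ^ 2 = 0)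
    (c : ℝ) (hc : c = lam / mu)
    (B : Matrix (Fin n ⊕ Fin m × Fin n) (Fin n ⊕ Fin m × Fin n) ℝ)
    (hB : B = Matrix.fromBlocks A
      (Matrix.of fun i (p : Fin m × Fin n) => A i p.2)
      (Matrix.of fun (p : Fin m × Fin n) j => A p.2 j)
      0)
    (y : Fin n ⊕ Fin m × Fin n → ℝ)
    (hy : y = Sum.elim x (fun p => c * x p.2)) :
    B.mulVec y = mu • y := by
  have hmuc : mu * c = lam := by rw [hc]; field_simp
  have htop : (1 + m * c) * lam = mu := by
    refine mul_left_cancel₀ hmu0 ?_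
    linear_combination (m * lam) * hmuc - hmu
  subst hB hy
  rw [fromBlocks_splitting_mulVec, hAx, Fintype.card_fin]
  ext (i | p)
  · simp only [Sum.elim_inl, Pi.smul_apply, smul_eq_mul, ← htop]; ring
  · simp only [Sum.elim_inr, Pi.smul_apply, smul_eq_mul, ← hmuc]; ring

theorem stmt_4 (n m : ℕ) (hm : 1 ≤ m)
    (A : Matrix (Fin n) (Fin n) ℝ) (hA : A.IsSymm)
    (x : Fin n → ℝ) (hx : ∑ i, x i ^ 2 = 1)
    (lam : ℝ) (hAx : A.mulVec x = lam • x)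
    (mu : ℝ) (hmu0 : mu ≠ 0) (hmu : mu ^ 2 - lam * mu - m * lam ^ 2 = 0)
    (c : ℝ) (hc : c = lam / mu)
    (B : Matrix (Fin n ⊕ Fin m × Fin n) (Fin n ⊕ Fin m × Fin n) ℝ)
    (hB : B = Matrix.fromBlocks A
      (Matrix.of fun i (p : Fin m × Fin n) => A i p.2)
      (Matrix.of fun (p : Fin m × Fin n) j => A p.2 j)
      0)
    (y : Fin n ⊕ Fin m × Fin n → ℝ)
    (hy : y = Sum.elim x (fun p => c * x p.2)) :
    B.mulVec y = mu • y :=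
  stmt_4_general n m A x lam hAx mu hmu0 hmu c hc B hB y hy
end

section
/- Let A be a symmetric real n×n matrix with eigenvalue λ ≠ 0 and m ≥ 1, and let B be the adjacency block matrix of the m-splitting construction (top-left A, top-right A⊗1_{1×m}, bottom-left A⊗1_{m×1}, bottom-right 0). Then the two scalars μ± = λ·(1±√(1+4m))/2 are eigenvalues of B. -/
/-!
Lift an eigenvector `A x = λ x` to `y = (t x, x, …, x)`, with one copy of `x` per block of `B`.
Then `(B y)₀ = t λ x + m λ x` and `(B y)ₖ = t λ x`, so `B y = λ t y` exactly when
`t² = t + m`, whose roots are `(1 ± √(1 + 4m)) / 2`.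
-/

namespace Matrix

variable {R n κ : Type*} [CommRing R] [Fintype n]

/-- The `κ`-splitting of `A`: one new copy of every vertex for each `k : κ`, joined to the
neighbours of the original vertex. -/
def splitting (A : Matrix n n R) (κ : Type*) : Matrix (n ⊕ κ × n) (n ⊕ κ × n) R :=
  fromBlocks A (of fun i (p : κ × n) => A i p.2) (of fun (p : κ × n) j => A p.2 j) 0

theorem of_row_snd_mulVec (A : Matrix n n R) (x : n → R) :
    (of fun (p : κ × n) j => A p.2 j) *ᵥ x = fun p => (A *ᵥ x) p.2 :=
  rfl

variable [Fintype κ]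

theorem of_col_snd_mulVec (A : Matrix n n R) (x : κ × n → R) :
    (of fun i (p : κ × n) => A i p.2) *ᵥ x = ∑ k, A *ᵥ fun j => x (k, j) := by
  ext i
  simp only [mulVec, dotProduct, of_apply, Finset.sum_apply, Fintype.sum_prod_type]

theorem of_col_snd_mulVec_const (A : Matrix n n R) (x : n → R) :
    (of fun i (p : κ × n) => A i p.2) *ᵥ (fun p => x p.2) = Fintype.card κ • (A *ᵥ x) := by
  simp only [of_col_snd_mulVec, Finset.sum_const, Finset.card_univ]

theorem splitting_mulVec_of_mulVec_eq_smul {A : Matrix n n R} {x : n → R} {lam t : R}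
    (hAx : A *ᵥ x = lam • x) (ht : t * t = t + Fintype.card κ) :
    A.splitting κ *ᵥ Sum.elim (t • x) (fun p : κ × n => x p.2) =
      (lam * t) • Sum.elim (t • x) (fun p : κ × n => x p.2) := by
  rw [splitting, fromBlocks_mulVec, Sum.elim_comp_inl, Sum.elim_comp_inr, of_col_snd_mulVec_const,
    of_row_snd_mulVec, zero_mulVec, add_zero, mulVec_smul, hAx]
  ext (i | p)
  · simp only [Sum.elim_inl, Pi.add_apply, Pi.smul_apply, smul_eq_mul, nsmul_eq_mul,
      Pi.mul_apply, Pi.natCast_apply]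
    linear_combination -(lam * x i) * ht
  · simp only [Sum.elim_inr, Pi.smul_apply, smul_eq_mul]
    ring

theorem exists_splitting_mulVec_eq_smul [Nonempty κ] {A : Matrix n n R} {x : n → R}
    (hx : x ≠ 0) {lam t : R} (hAx : A *ᵥ x = lam • x) (ht : t * t = t + Fintype.card κ) :
    ∃ y ≠ 0, A.splitting κ *ᵥ y = (lam * t) • y := by
  refine ⟨_, fun hy => hx ?_, splitting_mulVec_of_mulVec_eq_smul hAx ht⟩
  obtain ⟨k⟩ := ‹Nonempty κ›
  ext j
  simpa using congrFun hy (Sum.inr (k, j))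

end Matrix

theorem half_one_add_mul_self {K : Type*} [Field K] [NeZero (2 : K)] {s c : K}
    (hs : s * s = 1 + 4 * c) : (1 + s) / 2 * ((1 + s) / 2) = (1 + s) / 2 + c := by
  field_simp
  linear_combination hs

theorem stmt_5_general (n m : ℕ) (hm : 1 ≤ m)
    (A : Matrix (Fin n) (Fin n) ℝ)
    (x : Fin n → ℝ) (hx : x ≠ 0)
    (lam : ℝ) (hAx : A.mulVec x = lam • x)
    (B : Matrix (Fin n ⊕ Fin m × Fin n) (Fin n ⊕ Fin m × Fin n) ℝ)
    (hB : B = Matrix.fromBlocks A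
      (Matrix.of fun i (p : Fin m × Fin n) => A i p.2)
      (Matrix.of fun (p : Fin m × Fin n) j => A p.2 j)
      0) :
    (∃ y ≠ 0, B.mulVec y = (lam * ((1 + Real.sqrt (1 + 4 * m)) / 2)) • y) ∧
    (∃ y ≠ 0, B.mulVec y = (lam * ((1 - Real.sqrt (1 + 4 * m)) / 2)) • y) := by
  have : Nonempty (Fin m) := ⟨⟨0, hm⟩⟩
  have hs : √(1 + 4 * m) * √(1 + 4 * m) = 1 + 4 * (m : ℝ) := Real.mul_self_sqrt (by positivity)
  have hs' : -√(1 + 4 * m) * -√(1 + 4 * m) = 1 + 4 * (m : ℝ) := by rw [neg_mul_neg, hs]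
  rw [hB, sub_eq_add_neg]
  exact ⟨A.exists_splitting_mulVec_eq_smul hx hAx (by simpa using half_one_add_mul_self hs),
    A.exists_splitting_mulVec_eq_smul hx hAx (by simpa using half_one_add_mul_self hs')⟩

theorem stmt_5 (n m : ℕ) (hm : 1 ≤ m)
    (A : Matrix (Fin n) (Fin n) ℝ) (hA : A.IsSymm)
    (x : Fin n → ℝ) (hx : x ≠ 0)
    (lam : ℝ) (hlam : lam ≠ 0) (hAx : A.mulVec x = lam • x)
    (B : Matrix (Fin n ⊕ Fin m × Fin n) (Fin n ⊕ Fin m × Fin n) ℝ)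
    (hB : B = Matrix.fromBlocks A
      (Matrix.of fun i (p : Fin m × Fin n) => A i p.2)
      (Matrix.of fun (p : Fin m × Fin n) j => A p.2 j)
      0) :
    (∃ y ≠ 0, B.mulVec y = (lam * ((1 + Real.sqrt (1 + 4 * m)) / 2)) • y) ∧
    (∃ y ≠ 0, B.mulVec y = (lam * ((1 - Real.sqrt (1 + 4 * m)) / 2)) • y) :=
  stmt_5_general n m hm A x hx lam hAx B hB
end

section
/- Let A be the symmetric adjacency matrix of a graph G on n vertices and B = J_m ⊗ A the adjacency matrix of the m-shadow graph D_m(G). Then for every copy index r ∈ {1,…,m} and every vertex index k, the (r,k)-diagonal entry of |B| equals the k-th diagonal entry of |A|; equivalently, the vertex energy of each vertex of D_m(G) equals the vertex energy of the corresponding vertex of G. -/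
open Kronecker

open Matrix

open scoped MatrixOrder ComplexOrder

/-
Since `J` is positive semidefinite, `J ⊗ |A|` is a positive semidefinite square root of
`(J ⊗ A)² = J² ⊗ A²`; by uniqueness of positive square roots, `|J ⊗ A| = J ⊗ |A|`, whose
`((r, k), (r, k))` entry is `J r r * |A| k k = |A| k k`.
-/

namespace Matrix

theorem kronecker_pow {α ι κ : Type*} [CommSemiring α] [Fintype ι] [Fintype κ]
    [DecidableEq ι] [DecidableEq κ] (A : Matrix ι ι α) (B : Matrix κ κ α) (k : ℕ) :
    (A ⊗ₖ B) ^ k = (A ^ k) ⊗ₖ (B ^ k) := by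
  induction k with
  | zero => simp only [pow_zero, one_kronecker_one]
  | succ k ih => rw [pow_succ, pow_succ, pow_succ, ih, mul_kronecker_mul]

theorem posSemidef_of_fun_one {R ι : Type*} [CommRing R] [PartialOrder R] [StarRing R]
    [StarOrderedRing R] [Fintype ι] :
    (of fun _ _ : ι => (1 : R)).PosSemidef := by
  simpa [vecMulVec] using posSemidef_vecMulVec_self_star (1 : ι → R)

theorem PosSemidef.eq_kronecker_of_sq_eq {𝕜 ι κ : Type*} [RCLike 𝕜]
    [Fintype ι] [Fintype κ] [DecidableEq ι] [DecidableEq κ]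
    {J : Matrix ι ι 𝕜} {A S : Matrix κ κ 𝕜} {T : Matrix (ι × κ) (ι × κ) 𝕜}
    (hJ : J.PosSemidef) (hS : S.PosSemidef) (hS2 : S ^ 2 = A ^ 2)
    (hT : T.PosSemidef) (hT2 : T ^ 2 = (J ⊗ₖ A) ^ 2) :
    T = J ⊗ₖ S := by
  have hJS : (J ⊗ₖ S).PosSemidef := hJ.kronecker hS
  refine (CFC.sq_eq_sq_iff T (J ⊗ₖ S) hT.nonneg hJS.nonneg).mp ?_
  rw [hT2, kronecker_pow, kronecker_pow, hS2]

end Matrix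

theorem stmt_10_general (n m : ℕ)
    (A : Matrix (Fin n) (Fin n) ℝ)
    (J : Matrix (Fin m) (Fin m) ℝ) (hJ : J = Matrix.of fun _ _ => (1 : ℝ))
    (S : Matrix (Fin n) (Fin n) ℝ) (hS : S.PosSemidef) (hS2 : S ^ 2 = A ^ 2)
    (T : Matrix (Fin m × Fin n) (Fin m × Fin n) ℝ)
    (hT : T.PosSemidef) (hT2 : T ^ 2 = (J ⊗ₖ A) ^ 2) :
    ∀ (r : Fin m) (k : Fin n), T (r, k) (r, k) = S k k := by
  subst hJ
  intro r k
  rw [posSemidef_of_fun_one.eq_kronecker_of_sq_eq hS hS2 hT hT2]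
  simp [kroneckerMap_apply]

theorem stmt_10 (n m : ℕ) (hm : 1 ≤ m)
    (A : Matrix (Fin n) (Fin n) ℝ) (hA : A.IsSymm)
    (J : Matrix (Fin m) (Fin m) ℝ) (hJ : J = Matrix.of fun _ _ => (1 : ℝ))
    (S : Matrix (Fin n) (Fin n) ℝ) (hS : S.PosSemidef) (hS2 : S ^ 2 = A ^ 2)
    (T : Matrix (Fin m × Fin n) (Fin m × Fin n) ℝ)
    (hT : T.PosSemidef) (hT2 : T ^ 2 = (J ⊗ₖ A) ^ 2) :
    ∀ (r : Fin m) (k : Fin n), T (r, k) (r, k) = S k k :=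
  stmt_10_general n m A J hJ S hS hS2 T hT hT2
end

section
/- Let A be a real symmetric n×n matrix and let B = [[A, A⊗1ᵀ_m],[A⊗1_m, 0_{mn}]] be the adjacency matrix of the m-splitting graph. Then the k-th diagonal entry of |B| (for k ≤ n, an original vertex) equals ((2m+1)/√(4m+1)) times the k-th diagonal entry of |A|. -/
/-!
Up to reindexing, `B = C ⊗ A` where `C = [[1, 1ᵀ], [1, 0]]` is the `(m+1) × (m+1)` pattern of
the splitting construction. Kronecker products of positive semidefinite matrices are positive
semidefinite and `(X ⊗ Y)² = X² ⊗ Y²`, so by uniqueness of positive square roots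
`|B| = |C| ⊗ |A|`. The matrix `|C|` is explicit, with corner entry `(2m+1)/√(4m+1)`.
-/

open Matrix
open scoped Kronecker MatrixOrder ComplexOrder

lemma kronecker_sq {R l m : Type*} [CommSemiring R] [Fintype l] [Fintype m]
    [DecidableEq l] [DecidableEq m] (X : Matrix l l R) (Y : Matrix m m R) :
    (X ⊗ₖ Y) ^ 2 = (X ^ 2) ⊗ₖ (Y ^ 2) := by
  simp only [sq, mul_kronecker_mul]

lemma eq_reindex_kronecker_of_sq_eq {𝕜 l m n : Type*} [RCLike 𝕜] [Fintype l] [Fintype m]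
    [Fintype n] [DecidableEq l] [DecidableEq m] [DecidableEq n] (e : l × m ≃ n)
    {T : Matrix n n 𝕜} (hT : T.PosSemidef) {X X' : Matrix l l 𝕜} {Y Y' : Matrix m m 𝕜}
    (hX' : X'.PosSemidef) (hY' : Y'.PosSemidef) (hX : X' ^ 2 = X ^ 2) (hY : Y' ^ 2 = Y ^ 2)
    (h : T ^ 2 = reindex e e (X ⊗ₖ Y) ^ 2) :
    T = reindex e e (X' ⊗ₖ Y') := by
  have hpsd : (reindex e e (X' ⊗ₖ Y')).PosSemidef := (hX'.kronecker hY').submatrix _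
  rw [← CFC.sq_eq_sq_iff T _ hT.nonneg hpsd.nonneg, h]
  simp only [← coe_reindexAlgEquiv 𝕜 𝕜, ← map_pow, kronecker_sq, hX, hY]

section SplittingPattern

variable (κ : Type*) [Fintype κ]

def splittingPattern : Matrix (Unit ⊕ κ) (Unit ⊕ κ) ℝ :=
  fromBlocks 1 (of fun _ _ => 1) (of fun _ _ => 1) 0

/- This is `(2 C² - C) / √(4m+1)` for `C = splittingPattern κ`: the eigenvalues of `C` are `0` and
`(1 ± √(4m+1)) / 2`, and `t ↦ (2 t² - t) / √(4m+1)` sends each of them to its absolute value. -/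
noncomputable def absSplittingPattern : Matrix (Unit ⊕ κ) (Unit ⊕ κ) ℝ :=
  (√(4 * Fintype.card κ + 1))⁻¹ • fromBlocks (of fun _ _ => (2 * Fintype.card κ + 1 : ℝ))
    (of fun _ _ => 1) (of fun _ _ => 1) (of fun _ _ => 2)

lemma absSplittingPattern_sq [DecidableEq κ] :
    absSplittingPattern κ ^ 2 = splittingPattern κ ^ 2 := by
  have hs : (√(4 * Fintype.card κ + 1 : ℝ))⁻¹ ^ 2 = (4 * Fintype.card κ + 1 : ℝ)⁻¹ := by
    rw [inv_pow, Real.sq_sqrt (by positivity)]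
  rw [absSplittingPattern, smul_pow, hs, splittingPattern]
  ext (_ | i) (_ | j) <;>
    simp [sq, fromBlocks_multiply, Matrix.mul_apply] <;> field_simp <;> ring

lemma absSplittingPattern_posSemidef : (absSplittingPattern κ).PosSemidef := by
  set e₀ : Unit ⊕ κ → ℝ := Sum.elim (fun _ => 1) (fun _ => 0)
  set v : Unit ⊕ κ → ℝ := Sum.elim (fun _ => 1 / 2) (fun _ => 1)
  have hdecomp : fromBlocks (of fun _ _ => (2 * Fintype.card κ + 1 : ℝ))
      (of fun _ _ => 1) (of fun _ _ => 1) (of fun _ _ => 2) =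
      (2 * Fintype.card κ + 1 / 2 : ℝ) • vecMulVec e₀ e₀ + (2 : ℝ) • vecMulVec v v := by
    ext (_ | i) (_ | j) <;> simp [e₀, v, vecMulVec, add_assoc, ← two_mul]
  have hrank_one (w : Unit ⊕ κ → ℝ) : (vecMulVec w w).PosSemidef := by
    simpa only [star_trivial] using posSemidef_vecMulVec_self_star w
  rw [absSplittingPattern, hdecomp]
  exact .smul (((hrank_one e₀).smul (by positivity)).add ((hrank_one v).smul (by positivity)))
    (by positivity)

end SplittingPattern

def splittingEquiv (κ ι : Type*) : (Unit ⊕ κ) × ι ≃ ι ⊕ κ × ι :=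
  (Equiv.sumProdDistrib _ _ _).trans ((Equiv.punitProd ι).sumCongr (Equiv.refl _))

lemma fromBlocks_eq_reindex_splittingPattern_kronecker {κ ι : Type*} (A : Matrix ι ι ℝ) :
    fromBlocks A (of fun i (p : κ × ι) => A i p.2) (of fun (p : κ × ι) j => A p.2 j) 0 =
      reindex (splittingEquiv κ ι) (splittingEquiv κ ι) (splittingPattern κ ⊗ₖ A) := by
  ext (i | p) (j | q) <;> simp [splittingEquiv, splittingPattern]

theorem stmt_14_general (n m : ℕ)
    (A : Matrix (Fin n) (Fin n) ℝ)
    (B : Matrix (Fin n ⊕ Fin m × Fin n) (Fin n ⊕ Fin m × Fin n) ℝ)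
    (hB : B = Matrix.fromBlocks A
      (Matrix.of fun i (p : Fin m × Fin n) => A i p.2)
      (Matrix.of fun (p : Fin m × Fin n) j => A p.2 j)
      0)
    (S : Matrix (Fin n) (Fin n) ℝ) (hS : S.PosSemidef) (hS2 : S ^ 2 = A ^ 2)
    (T : Matrix (Fin n ⊕ Fin m × Fin n) (Fin n ⊕ Fin m × Fin n) ℝ)
    (hT : T.PosSemidef) (hT2 : T ^ 2 = B ^ 2) :
    ∀ k : Fin n, T (Sum.inl k) (Sum.inl k)
      = ((2 * m + 1) / Real.sqrt (4 * m + 1)) * S k k := by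
  intro k
  rw [hB, fromBlocks_eq_reindex_splittingPattern_kronecker] at hT2
  rw [eq_reindex_kronecker_of_sq_eq _ hT (absSplittingPattern_posSemidef _) hS
    (absSplittingPattern_sq _) hS2 hT2]
  simp [splittingEquiv, absSplittingPattern, div_eq_inv_mul]

theorem stmt_14 (n m : ℕ) (hm : 1 ≤ m)
    (A : Matrix (Fin n) (Fin n) ℝ) (hA : A.IsSymm)
    (B : Matrix (Fin n ⊕ Fin m × Fin n) (Fin n ⊕ Fin m × Fin n) ℝ)
    (hB : B = Matrix.fromBlocks A
      (Matrix.of fun i (p : Fin m × Fin n) => A i p.2)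
      (Matrix.of fun (p : Fin m × Fin n) j => A p.2 j)
      0)
    (S : Matrix (Fin n) (Fin n) ℝ) (hS : S.PosSemidef) (hS2 : S ^ 2 = A ^ 2)
    (T : Matrix (Fin n ⊕ Fin m × Fin n) (Fin n ⊕ Fin m × Fin n) ℝ)
    (hT : T.PosSemidef) (hT2 : T ^ 2 = B ^ 2) :
    ∀ k : Fin n, T (Sum.inl k) (Sum.inl k)
      = ((2 * m + 1) / Real.sqrt (4 * m + 1)) * S k k :=
  stmt_14_general n m A B hB S hS hS2 T hT hT2
end

section
/- Let A be a real symmetric n×n matrix and B the adjacency matrix of the m-splitting graph as above. For any split vertex, i.e., an index of the form (j,k) with j ∈ {1,…,m} and k ≤ n in the bottom block, the corresponding diagonal entry of |B| equals (2/√(4m+1)) times the k-th diagonal entry of |A|. -/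
/-!
Up to a reindexing of `Fin n ⊕ Fin m × Fin n` as `(Unit ⊕ Fin m) × Fin n`, the matrix `B` is the
Kronecker product `B₀ ⊗ A` with `B₀ = [[1, 1ᵀ], [1, 0]]`. Hence `B² = B₀² ⊗ A²`, and by uniqueness
of positive semidefinite square roots `|B| = |B₀| ⊗ |A|`. The matrix `|B₀|` is explicit:
`|B₀| = (4m+1)^(-1/2) [[2m+1, 1ᵀ], [1, 2J]]` with `J` the all-ones matrix, whose bottom
diagonal entries are `2 / √(4m+1)`.
-/

open Matrix Kronecker
open scoped ComplexOrder

namespace Matrix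

variable {𝕜 ι α β : Type*} [RCLike 𝕜] [Fintype ι] [DecidableEq ι] [Fintype α] [Fintype β]

theorem PosSemidef.eq_of_sq_eq_sq {T K : Matrix ι ι 𝕜} (hT : T.PosSemidef) (hK : K.PosSemidef)
    (h : T ^ 2 = K ^ 2) : T = K := by
  open scoped MatrixOrder in exact (CFC.sq_eq_sq_iff T K hT.nonneg hK.nonneg).mp h

variable [DecidableEq α] [DecidableEq β]

theorem submatrix_kronecker_sq (M : Matrix α α 𝕜) (N : Matrix β β 𝕜) (e : ι ≃ α × β) :
    ((M ⊗ₖ N).submatrix e e) ^ 2 = ((M ^ 2) ⊗ₖ (N ^ 2)).submatrix e e := by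
  rw [sq, sq, sq, submatrix_mul_equiv, mul_kronecker_mul]

theorem eq_submatrix_kronecker_of_sq_eq {M K : Matrix α α 𝕜} {N S : Matrix β β 𝕜}
    {T : Matrix ι ι 𝕜} (e : ι ≃ α × β) (hK : K.PosSemidef) (hK2 : K ^ 2 = M ^ 2)
    (hS : S.PosSemidef) (hS2 : S ^ 2 = N ^ 2) (hT : T.PosSemidef)
    (hT2 : T ^ 2 = ((M ⊗ₖ N).submatrix e e) ^ 2) :
    T = (K ⊗ₖ S).submatrix e e := by
  refine hT.eq_of_sq_eq_sq ((hK.kronecker hS).submatrix e) ?_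
  rw [hT2, submatrix_kronecker_sq, submatrix_kronecker_sq, hK2, hS2]

end Matrix

namespace SplittingGraph

variable (n m : ℕ)

def coreMatrix : Matrix (Unit ⊕ Fin m) (Unit ⊕ Fin m) ℝ :=
  fromBlocks (of fun _ _ => 1) (of fun _ _ => 1) (of fun _ _ => 1) 0

/-- `|coreMatrix m|`; the top-left entry of its square is right because
`(2m+1)² + m = (m+1)(4m+1)`. -/
noncomputable def coreMatrixAbs : Matrix (Unit ⊕ Fin m) (Unit ⊕ Fin m) ℝ :=
  (√(4 * m + 1))⁻¹ •
    fromBlocks (of fun _ _ => (2 * m + 1 : ℝ)) (of fun _ _ => 1) (of fun _ _ => 1)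
      (of fun _ _ => 2)

def indexEquiv : Fin n ⊕ Fin m × Fin n ≃ (Unit ⊕ Fin m) × Fin n :=
  ((Equiv.uniqueProd (Fin n) Unit).symm.sumCongr (Equiv.refl _)).trans
    (Equiv.sumProdDistrib _ _ _).symm

theorem fromBlocks_eq_submatrix_kronecker (A : Matrix (Fin n) (Fin n) ℝ) :
    fromBlocks A (of fun i (p : Fin m × Fin n) => A i p.2) (of fun (p : Fin m × Fin n) j => A p.2 j)
        0 =
      (coreMatrix m ⊗ₖ A).submatrix (indexEquiv n m) (indexEquiv n m) := by
  ext (i | ⟨a, i⟩) (j | ⟨b, j⟩) <;> simp [coreMatrix, indexEquiv]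

theorem coreMatrixAbs_sq : coreMatrixAbs m ^ 2 = coreMatrix m ^ 2 := by
  have hs : √(4 * m + 1 : ℝ) ^ 2 = 4 * m + 1 := Real.sq_sqrt (by positivity)
  have hs0 : √(4 * m + 1 : ℝ) ≠ 0 := by positivity
  ext (i | i) (j | j) <;>
    simp [coreMatrixAbs, coreMatrix, sq, mul_apply, fromBlocks, Fintype.sum_sum_type] <;>
    field_simp <;> simp only [hs] <;> ring

theorem coreMatrixAbs_posSemidef : (coreMatrixAbs m).PosSemidef := by
  have hdecomp : (fromBlocks (of fun _ _ => (2 * m + 1 : ℝ)) (of fun _ _ => 1) (of fun _ _ => 1)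
      (of fun _ _ => 2) : Matrix (Unit ⊕ Fin m) (Unit ⊕ Fin m) ℝ) =
        vecMulVec 1 1 + vecMulVec (Sum.elim 0 1) (Sum.elim 0 1) +
          (2 * m : ℝ) • vecMulVec (Sum.elim 1 0) (Sum.elim 1 0) := by
    ext (i | i) (j | j) <;> simp [vecMulVec] <;> ring
  have hvv (v : Unit ⊕ Fin m → ℝ) : (vecMulVec v v).PosSemidef := by
    simpa using posSemidef_vecMulVec_self_star v
  rw [coreMatrixAbs, hdecomp]
  exact (((hvv _).add (hvv _)).add ((hvv _).smul (by positivity))).smul (by positivity)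

end SplittingGraph

theorem stmt_15_general (n m : ℕ)
    (A : Matrix (Fin n) (Fin n) ℝ)
    (B : Matrix (Fin n ⊕ Fin m × Fin n) (Fin n ⊕ Fin m × Fin n) ℝ)
    (hB : B = Matrix.fromBlocks A
      (Matrix.of fun i (p : Fin m × Fin n) => A i p.2)
      (Matrix.of fun (p : Fin m × Fin n) j => A p.2 j)
      0)
    (S : Matrix (Fin n) (Fin n) ℝ) (hS : S.PosSemidef) (hS2 : S ^ 2 = A ^ 2)
    (T : Matrix (Fin n ⊕ Fin m × Fin n) (Fin n ⊕ Fin m × Fin n) ℝ)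
    (hT : T.PosSemidef) (hT2 : T ^ 2 = B ^ 2) :
    ∀ (j : Fin m) (k : Fin n), T (Sum.inr (j, k)) (Sum.inr (j, k))
      = (2 / Real.sqrt (4 * m + 1)) * S k k := by
  intro j k
  rw [hB, SplittingGraph.fromBlocks_eq_submatrix_kronecker] at hT2
  have hT_eq : T = (SplittingGraph.coreMatrixAbs m ⊗ₖ S).submatrix
      (SplittingGraph.indexEquiv n m) (SplittingGraph.indexEquiv n m) :=
    eq_submatrix_kronecker_of_sq_eq _ (SplittingGraph.coreMatrixAbs_posSemidef m)
      (SplittingGraph.coreMatrixAbs_sq m) hS hS2 hT hT2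
  rw [hT_eq]
  simp [SplittingGraph.coreMatrixAbs, SplittingGraph.indexEquiv, div_eq_inv_mul, mul_assoc]

theorem stmt_15 (n m : ℕ) (hm : 1 ≤ m)
    (A : Matrix (Fin n) (Fin n) ℝ) (hA : A.IsSymm)
    (B : Matrix (Fin n ⊕ Fin m × Fin n) (Fin n ⊕ Fin m × Fin n) ℝ)
    (hB : B = Matrix.fromBlocks A
      (Matrix.of fun i (p : Fin m × Fin n) => A i p.2)
      (Matrix.of fun (p : Fin m × Fin n) j => A p.2 j)
      0)
    (S : Matrix (Fin n) (Fin n) ℝ) (hS : S.PosSemidef) (hS2 : S ^ 2 = A ^ 2)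
    (T : Matrix (Fin n ⊕ Fin m × Fin n) (Fin n ⊕ Fin m × Fin n) ℝ)
    (hT : T.PosSemidef) (hT2 : T ^ 2 = B ^ 2) :
    ∀ (j : Fin m) (k : Fin n), T (Sum.inr (j, k)) (Sum.inr (j, k))
      = (2 / Real.sqrt (4 * m + 1)) * S k k :=
  stmt_15_general n m A B hB S hS hS2 T hT hT2
end

section
/- The graph energy of the splitting graph S'(G) equals √5 times the energy of G: E(S'(G)) = √5·E(G). -/
/-!
Let `φ, ψ` be the two roots of `x ^ 2 = x + 1`. The block matrix `P = [[φ • 1, ψ • 1], [1, 1]]`,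
the eigenvector matrix of `[[1, 1], [1, 0]]` tensored with the identity, is invertible and
conjugates `[[A, A], [A, 0]]` to `diag(φ • A, ψ • A)`. So the spectrum of `S'(G)` is the
multiset union of `φ • spec A` and `ψ • spec A`, and its energy is
`(|φ| + |ψ|) E(G) = (φ - ψ) E(G) = √5 E(G)`.
-/

open Matrix Polynomial

section SplittingBlock

variable {n : Type*} [Fintype n] [DecidableEq n]

lemma fromBlocks_self_self_self_zero_mul {R : Type*} [CommRing R] (A : Matrix n n R) {r s : R}
    (hr : r ^ 2 = r + 1) (hs : s ^ 2 = s + 1) :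
    fromBlocks A A A 0 * fromBlocks (r • 1) (s • 1) 1 1
      = fromBlocks (r • 1) (s • 1) 1 1 * fromBlocks (r • A) 0 0 (s • A) := by
  simp only [fromBlocks_multiply, Matrix.mul_one, Matrix.mul_smul, Matrix.smul_mul,
    Matrix.one_mul, Matrix.mul_zero, add_zero, zero_add, smul_smul, ← sq, hr, hs, add_smul,
    one_smul]

lemma charpoly_fromBlocks_self_self_self_zero {K : Type*} [Field K] (A : Matrix n n K) {r s : K}
    (hr : r ^ 2 = r + 1) (hs : s ^ 2 = s + 1) (hrs : r ≠ s) :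
    (fromBlocks A A A 0).charpoly = (r • A).charpoly * (s • A).charpoly := by
  set P : Matrix (n ⊕ n) (n ⊕ n) K := fromBlocks (r • 1) (s • 1) 1 1
  set Q : Matrix (n ⊕ n) (n ⊕ n) K := (r - s)⁻¹ • fromBlocks 1 (-s • 1) (-1) (r • 1)
  have hPQ : P * Q = 1 := by
    have hdiag : (r - s)⁻¹ * r - (r - s)⁻¹ * s = 1 := by
      rw [← mul_sub, inv_mul_cancel₀ (sub_ne_zero.mpr hrs)]
    simp [P, Q, fromBlocks_multiply, fromBlocks_smul, smul_smul, ← sub_eq_add_neg, neg_add_eq_sub,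
      ← sub_smul, hdiag, mul_right_comm _ s r]
  have hQP : Q * P = 1 := mul_eq_one_comm.mp hPQ
  calc (fromBlocks A A A 0).charpoly
      = (P * (fromBlocks (r • A) 0 0 (s • A) * Q)).charpoly := by
        rw [← Matrix.mul_assoc, ← fromBlocks_self_self_self_zero_mul A hr hs, Matrix.mul_assoc, hPQ,
          Matrix.mul_one]
    _ = (fromBlocks (r • A) 0 0 (s • A)).charpoly := by
        rw [charpoly_mul_comm, Matrix.mul_assoc, hQP, Matrix.mul_one]
    _ = (r • A).charpoly * (s • A).charpoly := charpoly_fromBlocks_zero₁₂ ..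

end SplittingBlock

namespace Matrix.IsHermitian

variable {n : Type*} [Fintype n] [DecidableEq n] {A : Matrix n n ℝ}

lemma sum_abs_eigenvalues_eq_sum_abs_roots (hA : A.IsHermitian) :
    ∑ i, |hA.eigenvalues i| = (A.charpoly.roots.map abs).sum := by
  simp [hA.roots_charpoly_eq_eigenvalues, Multiset.map_map]

lemma roots_charpoly_smul (hA : A.IsHermitian) (c : ℝ) :
    (c • A).charpoly.roots = A.charpoly.roots.map (c * ·) := by
  rw [← cfc_const_mul_id c A, hA.charpoly_cfc_eq, hA.roots_charpoly_eq_eigenvalues, roots_prod]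
  · simp [-map_mul, Multiset.map_map]
  · exact Finset.prod_ne_zero_iff.mpr fun i _ => X_sub_C_ne_zero _

end Matrix.IsHermitian

lemma Multiset.sum_map_abs_mul_left {α : Type*} [CommRing α] [LinearOrder α]
    [IsStrictOrderedRing α] (s : Multiset α) (c : α) :
    ((s.map (c * ·)).map abs).sum = |c| * (s.map abs).sum := by
  simp [Multiset.map_map, abs_mul, Multiset.sum_map_mul_left]

theorem stmt_17 (n : ℕ)
    (A : Matrix (Fin n) (Fin n) ℝ) (hA : A.IsHermitian)
    (B : Matrix (Fin n ⊕ Fin n) (Fin n ⊕ Fin n) ℝ)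
    (hBdef : B = Matrix.fromBlocks A A A 0)
    (hB : B.IsHermitian) :
    ∑ p, |hB.eigenvalues p| = Real.sqrt 5 * ∑ i, |hA.eigenvalues i| := by
  have hroots : B.charpoly.roots = A.charpoly.roots.map (Real.goldenRatio * ·)
      + A.charpoly.roots.map (Real.goldenConj * ·) := by
    rw [hBdef, charpoly_fromBlocks_self_self_self_zero A Real.goldenRatio_sq Real.goldenConj_sq
        (Real.goldenConj_neg.trans Real.goldenRatio_pos).ne',
      roots_mul ((charpoly_monic _).mul (charpoly_monic _)).ne_zero, hA.roots_charpoly_smul,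
      hA.roots_charpoly_smul]
  rw [hB.sum_abs_eigenvalues_eq_sum_abs_roots, hA.sum_abs_eigenvalues_eq_sum_abs_roots, hroots,
    Multiset.map_add, Multiset.sum_add, Multiset.sum_map_abs_mul_left,
    Multiset.sum_map_abs_mul_left, ← add_mul, abs_of_pos Real.goldenRatio_pos,
    abs_of_neg Real.goldenConj_neg, ← sub_eq_add_neg, Real.goldenRatio_sub_goldenConj]
end

section
/- For a real symmetric n×n matrix A and m ≥ 1, the characteristic polynomial of B = [[A, A⊗1ᵀ_m],[A⊗1_m, 0_{mn}]] is given by det(μI - B) = μ^{(m-1)n} · Π_{i=1}^{n} (μ² - λᵢμ - mλᵢ²), where λ₁,…,λ_n are the eigenvalues of A. -/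
open Polynomial

open Matrix

theorem stmt_19 (n m : ℕ) (hm : 1 ≤ m)
    (A : Matrix (Fin n) (Fin n) ℝ) (hA : A.IsHermitian)
    (B : Matrix (Fin n ⊕ Fin m × Fin n) (Fin n ⊕ Fin m × Fin n) ℝ)
    (hB : B = Matrix.fromBlocks A
      (Matrix.of fun i (p : Fin m × Fin n) => A i p.2)
      (Matrix.of fun (p : Fin m × Fin n) j => A p.2 j)
      0) :
    B.charpoly = X ^ ((m - 1) * n)
      * ∏ i : Fin n, (X ^ 2 - C (hA.eigenvalues i) * X - C (m * hA.eigenvalues i ^ 2)) := by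
  classical
  set lam := hA.eigenvalues with hlam
  set A' : Matrix (Fin n) (Fin n) ℝ[X] := A.map C with hA'def
  set T' : Matrix (Fin n) (Fin m × Fin n) ℝ[X] :=
    (Matrix.of fun i (p : Fin m × Fin n) => A i p.2).map C with hT'
  set S' : Matrix (Fin m × Fin n) (Fin n) ℝ[X] :=
    (Matrix.of fun (p : Fin m × Fin n) j => A p.2 j).map C with hS'
  have hTS : T' * S' = (m : ℝ[X]) • (A' * A') := by
    refine Matrix.ext fun i j => ?_
    simp only [hT', hS', hA'def, Matrix.mul_apply, Matrix.smul_apply, Matrix.map_apply,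
      Matrix.of_apply, smul_eq_mul, Fintype.sum_prod_type]
    rw [Finset.sum_const, Finset.card_univ, Fintype.card_fin, nsmul_eq_mul, Finset.mul_sum]
  have h1 : charmatrix A = (X : ℝ[X]) • 1 - A' := by
    refine Matrix.ext fun i j => ?_
    rcases eq_or_ne i j with h | h
    · subst h; simp [hA'def]
    · simp [h, hA'def]
  have h0 : charmatrix (0 : Matrix (Fin m × Fin n) (Fin m × Fin n) ℝ) = (X : ℝ[X]) • 1 := by
    refine Matrix.ext fun i j => ?_
    rcases eq_or_ne i j with h | h
    · subst h; simp
    · simp [h]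
  have hch : B.charmatrix = Matrix.fromBlocks ((X : ℝ[X]) • 1 - A') (-T') (-S')
      ((X : ℝ[X]) • (1 : Matrix (Fin m × Fin n) (Fin m × Fin n) ℝ[X])) := by
    rw [hB, Matrix.charmatrix_fromBlocks, h1, h0, hT', hS']
  set P : Matrix (Fin n) (Fin n) ℝ[X] :=
    (X : ℝ[X]) ^ 2 • 1 - (X : ℝ[X]) • A' - (m : ℝ[X]) • (A' * A') with hP
  set N : Matrix (Fin n ⊕ Fin m × Fin n) (Fin n ⊕ Fin m × Fin n) ℝ[X] :=
    Matrix.fromBlocks ((X : ℝ[X]) • 1) 0 S' 1 with hN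
  have hmul : B.charmatrix * N =
      Matrix.fromBlocks P (-T') 0
        ((X : ℝ[X]) • (1 : Matrix (Fin m × Fin n) (Fin m × Fin n) ℝ[X])) := by
    rw [hch, hN, Matrix.fromBlocks_multiply, Matrix.fromBlocks_inj]
    refine ⟨?_, ?_, ?_, ?_⟩
    · simp only [Matrix.sub_mul, Matrix.smul_mul, Matrix.mul_smul, Matrix.mul_one,
        Matrix.one_mul, Matrix.neg_mul, hTS, smul_smul, ← sq, hP]
      module
    · simp
    · simp only [Matrix.neg_mul, Matrix.smul_mul, Matrix.mul_smul, Matrix.mul_zero,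
        Matrix.one_mul, Matrix.mul_one]
      module
    · simp
  have hdetN : N.det = (X : ℝ[X]) ^ n := by
    rw [hN, Matrix.det_fromBlocks_zero₁₂, Matrix.det_one, mul_one, Matrix.det_smul,
      Matrix.det_one, mul_one, Fintype.card_fin]
  have hdetX2 : ((X : ℝ[X]) • (1 : Matrix (Fin m × Fin n) (Fin m × Fin n) ℝ[X])).det
      = (X : ℝ[X]) ^ (m * n) := by
    rw [Matrix.det_smul, Matrix.det_one, mul_one, Fintype.card_prod, Fintype.card_fin,
      Fintype.card_fin]
  have key : B.charpoly * (X : ℝ[X]) ^ n = P.det * (X : ℝ[X]) ^ (m * n) := by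
    have h := congrArg Matrix.det hmul
    rw [Matrix.det_mul, hdetN, Matrix.det_fromBlocks_zero₂₁, hdetX2] at h
    rw [Matrix.charpoly, h]
  -- compute det P via the spectral theorem
  set U : Matrix (Fin n) (Fin n) ℝ := (hA.eigenvectorUnitary : Matrix (Fin n) (Fin n) ℝ) with hU
  have hUV : U * star U = 1 := Matrix.mem_unitaryGroup_iff.mp hA.eigenvectorUnitary.2
  have hVU : star U * U = 1 := Matrix.mem_unitaryGroup_iff'.mp hA.eigenvectorUnitary.2
  have hspec : A = U * Matrix.diagonal lam * star U := by
    have h := hA.spectral_theorem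
    simpa [hU, hlam] using h
  set U' : Matrix (Fin n) (Fin n) ℝ[X] := U.map C with hU'
  set V' : Matrix (Fin n) (Fin n) ℝ[X] := (star U).map C with hV'
  have hUV' : U' * V' = 1 := by
    rw [hU', hV', ← Matrix.map_mul, hUV]
    refine Matrix.ext fun i j => ?_
    rcases eq_or_ne i j with h | h
    · subst h; simp
    · simp [h]
  have hVU' : V' * U' = 1 := by
    rw [hU', hV', ← Matrix.map_mul, hVU]
    refine Matrix.ext fun i j => ?_
    rcases eq_or_ne i j with h | h
    · subst h; simp
    · simp [h]
  set D' : Matrix (Fin n) (Fin n) ℝ[X] := Matrix.diagonal (fun i => C (lam i)) with hD'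
  have hdiagmap : (Matrix.diagonal lam).map C = D' := by
    rw [hD']
    refine Matrix.ext fun i j => ?_
    rcases eq_or_ne i j with h | h
    · subst h; simp
    · simp [h]
  have hA'spec : A' = U' * D' * V' := by
    rw [hA'def, hspec, Matrix.map_mul, Matrix.map_mul, hdiagmap]
  have hAA : A' * A' = U' * (D' * D') * V' := by
    rw [hA'spec]
    simp only [Matrix.mul_assoc]
    rw [← Matrix.mul_assoc V' U', hVU', Matrix.one_mul]
  set Qd : Matrix (Fin n) (Fin n) ℝ[X] :=
    Matrix.diagonal (fun i => (X : ℝ[X]) ^ 2 - C (lam i) * X - C (m * lam i ^ 2)) with hQd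
  have hQdef : (X : ℝ[X]) ^ 2 • (1 : Matrix (Fin n) (Fin n) ℝ[X]) - (X : ℝ[X]) • D'
      - (m : ℝ[X]) • (D' * D') = Qd := by
    rw [hQd, hD', Matrix.diagonal_mul_diagonal]
    refine Matrix.ext fun i j => ?_
    rcases eq_or_ne i j with h | h
    · subst h
      simp only [Matrix.sub_apply, Matrix.smul_apply, Matrix.one_apply_eq,
        Matrix.diagonal_apply_eq, smul_eq_mul, mul_one, _root_.map_mul, map_pow, map_natCast]
      ring
    · simp [Matrix.one_apply, h]
  have hQ : U' * Qd * V' = P := by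
    rw [hP, ← hQdef]
    simp only [Matrix.mul_sub, Matrix.sub_mul, Matrix.mul_smul, Matrix.smul_mul, Matrix.mul_one]
    rw [hUV', ← hA'spec, ← hAA]
  have hdUV : U'.det * V'.det = 1 := by
    rw [← Matrix.det_mul, hUV', Matrix.det_one]
  have hdetP : P.det = ∏ i : Fin n, ((X : ℝ[X]) ^ 2 - C (lam i) * X - C (m * lam i ^ 2)) := by
    rw [← hQ, Matrix.det_mul, Matrix.det_mul]
    have : U'.det * Qd.det * V'.det = Qd.det * (U'.det * V'.det) := by ring
    rw [this, hdUV, mul_one, hQd, Matrix.det_diagonal]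
  have hpow : (m - 1) * n + n = m * n := by
    have h : (m - 1) + 1 = m := Nat.succ_pred_eq_of_pos hm
    calc (m - 1) * n + n = ((m - 1) + 1) * n := by ring
      _ = m * n := by rw [h]
  have hX : (X : ℝ[X]) ^ n ≠ 0 := pow_ne_zero _ Polynomial.X_ne_zero
  apply mul_right_cancel₀ hX
  rw [key, hdetP, mul_assoc, mul_comm (∏ i : Fin n, ((X : ℝ[X]) ^ 2 - C (lam i) * X
    - C (m * lam i ^ 2))) ((X : ℝ[X]) ^ n), ← mul_assoc, ← pow_add, hpow, mul_comm]
end
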